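/- arXiv:2501.05865 — 2 statements merged into one kernel-verified Lean document; each statement's English description precedes it below -/
import Mathlib

section
/- Let π be a set of primes, G a finite group, and S a normal subgroup of G such that every prime divisor of the index |G : S| belongs to π (i.e., G/S is a π-group). Suppose M is a Hall π-subgroup of S. Then the following two statements are equivalent: (1) there exists a Hall π-subgroup H of G such that M = H ∩ S; (2) the S-conjugacy class of M is G-invariant, that is, for every g ∈ G there exists s ∈ S with gMg⁻¹ = sMs⁻¹. -/
/-- `H` is a Hall `π`-subgroup of the ambient group: every prime divisor of `|H|`
belongs to `π`, and no prime in `π` divides the index `|G : H|`. -/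
def IsHallSubgroup {G : Type*} [Group G] (π : Set ℕ) (H : Subgroup G) : Prop :=
  (∀ p : ℕ, p.Prime → p ∣ Nat.card H → p ∈ π) ∧ ∀ p ∈ π, ¬ p ∣ H.index

/-!
If `H` is a Hall `π`-subgroup with `H ∩ S = M`, then `|G : S|` and `|G : H|` are coprime, so
`G = SH`, and conjugating `M = H ∩ S` by `sh` has the same effect as conjugating by `s`.
Conversely, `G`-invariance of the `S`-class of `M` is the Frattini argument `G = S N_G(M)`.
In `N_G(M)/M` the normal subgroup `(S ∩ N_G(M))/M` has `π'`-order and `π`-index, so by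
Schur–Zassenhaus it has a complement `H/M`. Then `HS = G` and `H ∩ S = M`, whence
`|H| = |M| |G : S|` and `|G : H| = |S : M|`.
-/

open scoped Pointwise

namespace Subgroup

variable {G : Type*} [Group G]

theorem map_conj_toMonoidHom (g : G) (M : Subgroup G) :
    M.map (MulAut.conj g).toMonoidHom = MulAut.conj g • M :=
  rfl

theorem conj_smul_eq_self_iff_mem_normalizer {g : G} {M : Subgroup G} :
    MulAut.conj g • M = M ↔ g ∈ normalizer (M : Set G) :=
  mem_normalizer_iff_map_conj_eq.symm

theorem sup_eq_top_of_coprime_index {H K : Subgroup G} (h : H.index.Coprime K.index) :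
    H ⊔ K = ⊤ := by
  rw [← index_eq_one, ← Nat.dvd_one, ← h.gcd_eq_one]
  exact Nat.dvd_gcd (index_dvd_of_le le_sup_left) (index_dvd_of_le le_sup_right)

theorem exists_conj_smul_inf_eq_of_sup_eq_top {S H : Subgroup G} [S.Normal] (hSH : S ⊔ H = ⊤)
    (g : G) : ∃ s ∈ S, MulAut.conj g • (H ⊓ S) = MulAut.conj s • (H ⊓ S) := by
  obtain ⟨s, hs, h, hh, rfl⟩ := mem_sup_of_normal_left.mp (hSH ▸ mem_top g : g ∈ S ⊔ H)
  refine ⟨s, hs, ?_⟩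
  rw [map_mul, mul_smul, smul_inf, conj_smul_eq_self_of_mem hh, Normal.conj_smul_eq_self h S]

theorem sup_normalizer_eq_top_of_forall_conj {S M : Subgroup G}
    (h : ∀ g : G, ∃ s ∈ S, MulAut.conj g • M = MulAut.conj s • M) :
    S ⊔ normalizer (M : Set G) = ⊤ := by
  refine eq_top_iff.mpr fun g _ => ?_
  obtain ⟨s, hs, hgs⟩ := h g
  have hn : s⁻¹ * g ∈ normalizer (M : Set G) := by
    rw [← conj_smul_eq_self_iff_mem_normalizer, map_mul, mul_smul, hgs, ← mul_smul, ← map_mul,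
      inv_mul_cancel, map_one, one_smul]
  simpa using mul_mem (mem_sup_left hs) (mem_sup_right hn)

theorem index_eq_relIndex_inf_of_sup_eq_top {S H : Subgroup G} [S.Normal] [S.FiniteIndex]
    (hHS : H ⊔ S = ⊤) : H.index = (H ⊓ S).relIndex S := by
  have h₁ : H.relIndex S * S.index = (H ⊓ S).index := by
    simpa only [inf_top_eq, relIndex_top_right] using relIndex_inf_mul_relIndex H S ⊤
  have h₂ : S.relIndex H * H.index = (H ⊓ S).index := by
    rw [← inf_relIndex_left, relIndex_mul_index inf_le_left]
  rw [← relIndex_sup_right H S, hHS, relIndex_top_right] at h₂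
  rw [inf_relIndex_right]
  exact (Nat.mul_right_inj (FiniteIndex.index_ne_zero (H := S))).mp
    (h₂.trans (h₁.symm.trans (mul_comm _ _)))

theorem card_eq_card_inf_mul_index_of_sup_eq_top {S H : Subgroup G} [S.Normal]
    (hHS : H ⊔ S = ⊤) : Nat.card H = Nat.card (H ⊓ S : Subgroup G) * S.index := by
  rw [← relIndex_bot_left, ← relIndex_bot_left, ← relIndex_mul_relIndex ⊥ (H ⊓ S) H bot_le
    inf_le_left, inf_relIndex_left, ← relIndex_sup_right H S, hHS, relIndex_top_right]

theorem isHallSubgroup_of_sup_eq_top {π : Set ℕ} {S H : Subgroup G} [S.Normal] [S.FiniteIndex]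
    (hquot : ∀ p : ℕ, p.Prime → p ∣ S.index → p ∈ π)
    (hHS : IsHallSubgroup π ((H ⊓ S).subgroupOf S)) (hsup : H ⊔ S = ⊤) :
    IsHallSubgroup π H := by
  refine ⟨fun p hp hdvd => ?_, fun p hpπ hdvd => hHS.2 p hpπ ?_⟩
  · rw [card_eq_card_inf_mul_index_of_sup_eq_top hsup, hp.dvd_mul] at hdvd
    rcases hdvd with hdvd | hdvd
    · exact hHS.1 p hp (by rwa [Nat.card_congr (subgroupOfEquivOfLe inf_le_right).toEquiv])
    · exact hquot p hp hdvd
  · rwa [index_eq_relIndex_inf_of_sup_eq_top hsup] at hdvd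

theorem exists_sup_eq_top_inf_eq_of_coprime {M T : Subgroup G} [M.Normal] [T.Normal]
    [T.FiniteIndex] (hMT : M ≤ T) (hco : (M.relIndex T).Coprime T.index) :
    ∃ K : Subgroup G, K ⊔ T = ⊤ ∧ K ⊓ T = M := by
  have hsurj := QuotientGroup.mk'_surjective M
  set T' := T.map (QuotientGroup.mk' M)
  have : T'.Normal := Normal.map inferInstance _ hsurj
  have hT : T'.comap (QuotientGroup.mk' M) = T := by
    rw [comap_map_eq, QuotientGroup.ker_mk', sup_of_le_left hMT]
  have hindex : T'.index = T.index := index_map_eq T hsurj (by rwa [QuotientGroup.ker_mk'])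
  have hcard : Nat.card T' = M.relIndex T := by
    refine (Nat.mul_left_inj (FiniteIndex.index_ne_zero (H := T))).mp ?_
    rw [relIndex_mul_index hMT, ← hindex, card_mul_index]
    rfl
  obtain ⟨K', hK'⟩ := exists_right_complement'_of_coprime
    (hcard ▸ hindex ▸ hco : (Nat.card T').Coprime T'.index)
  refine ⟨K'.comap (QuotientGroup.mk' M), ?_, ?_⟩
  · rw [← hT, comap_sup_eq _ _ _ hsurj, sup_comm, hK'.sup_eq_top, comap_top]
  · rw [← hT, ← comap_inf, inf_comm, hK'.disjoint.eq_bot, MonoidHom.comap_bot,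
      QuotientGroup.ker_mk']

theorem exists_sup_eq_top_inf_eq_of_sup_normalizer_eq_top {S M : Subgroup G}
    [S.Normal] [S.FiniteIndex] (hMS : M ≤ S) (hco : (M.relIndex S).Coprime S.index)
    (hN : S ⊔ normalizer (M : Set G) = ⊤) :
    ∃ H : Subgroup G, H ⊔ S = ⊤ ∧ H ⊓ S = M := by
  set N := normalizer (M : Set G)
  have hMN : M ≤ N := le_normalizer
  have : (S.subgroupOf N).Normal := ‹S.Normal›.subgroupOf N
  have hrel : (M.subgroupOf N).relIndex (S.subgroupOf N) ∣ M.relIndex S := by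
    rw [← inf_subgroupOf_right S, relIndex_subgroupOf inf_le_right]
    exact Dvd.intro _ (relIndex_mul_relIndex M (S ⊓ N) S (le_inf hMS hMN) inf_le_left)
  obtain ⟨K, hKsup, hKinf⟩ := exists_sup_eq_top_inf_eq_of_coprime (subgroupOf_mono N hMS)
    ((hco.coprime_dvd_left hrel).coprime_dvd_right (relIndex_dvd_index_of_normal S N))
  refine ⟨K.map N.subtype, ?_, ?_⟩
  · have hKS : K.map N.subtype ⊔ S ⊓ N = N := by
      rw [← subgroupOf_map_subtype, ← map_sup, hKsup, ← MonoidHom.range_eq_map, range_subtype]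
    rw [eq_top_iff, ← hN]
    refine sup_le le_sup_right ?_
    calc N = K.map N.subtype ⊔ S ⊓ N := hKS.symm
      _ ≤ K.map N.subtype ⊔ S := sup_le_sup_left inf_le_left _
  · calc K.map N.subtype ⊓ S = K.map N.subtype ⊓ (S ⊓ N) := by
          rw [inf_comm S, ← inf_assoc, inf_of_le_left (map_subtype_le K)]
      _ = (K ⊓ S.subgroupOf N).map N.subtype := by
          rw [map_inf_eq _ _ _ N.subtype_injective, subgroupOf_map_subtype]
      _ = M := by rw [hKinf, subgroupOf_map_subtype, inf_of_le_left hMN]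

end Subgroup

theorem hall_extension_iff_conjClass_invariant_general {G : Type*} [Group G] [Finite G]
    (π : Set ℕ)
    (S : Subgroup G) (hS : S.Normal)
    (hquot : ∀ p : ℕ, p.Prime → p ∣ S.index → p ∈ π)
    (M : Subgroup G) (hMS : M ≤ S) (hM : IsHallSubgroup π (M.subgroupOf S)) :
    (∃ H : Subgroup G, IsHallSubgroup π H ∧ M = H ⊓ S) ↔
    (∀ g : G, ∃ s ∈ S,
      M.map (MulAut.conj g).toMonoidHom = M.map (MulAut.conj s).toMonoidHom) := by
  simp only [Subgroup.map_conj_toMonoidHom]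
  constructor
  · rintro ⟨H, hH, rfl⟩
    have hco : S.index.Coprime H.index :=
      Nat.coprime_of_dvd fun p hp hpS => hH.2 p (hquot p hp hpS)
    exact Subgroup.exists_conj_smul_inf_eq_of_sup_eq_top
      (Subgroup.sup_eq_top_of_coprime_index hco)
  · intro hconj
    have hco : (M.relIndex S).Coprime S.index :=
      Nat.coprime_of_dvd fun p hp hpM hpS => hM.2 p (hquot p hp hpS) hpM
    obtain ⟨H, hsup, rfl⟩ := Subgroup.exists_sup_eq_top_inf_eq_of_sup_normalizer_eq_top hMS hco
      (Subgroup.sup_normalizer_eq_top_of_forall_conj hconj)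
    exact ⟨H, Subgroup.isHallSubgroup_of_sup_eq_top hquot hM hsup, rfl⟩

theorem hall_extension_iff_conjClass_invariant {G : Type*} [Group G] [Finite G]
    (π : Set ℕ) (hπ : ∀ p ∈ π, Nat.Prime p)
    (S : Subgroup G) (hS : S.Normal)
    (hquot : ∀ p : ℕ, p.Prime → p ∣ S.index → p ∈ π)
    (M : Subgroup G) (hMS : M ≤ S) (hM : IsHallSubgroup π (M.subgroupOf S)) :
    (∃ H : Subgroup G, IsHallSubgroup π H ∧ M = H ⊓ S) ↔
    (∀ g : G, ∃ s ∈ S,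
      M.map (MulAut.conj g).toMonoidHom = M.map (MulAut.conj s).toMonoidHom) :=
  hall_extension_iff_conjClass_invariant_general π S hS hquot M hMS hM
end

section
/- Every Hall {2, 3, 5}-subgroup of the symmetric group Sym₇ is the stabilizer of a point; that is, every subgroup of Sym₇ of order 720 equals the stabilizer of some element of the underlying 7-element set. Consequently, any two Hall {2, 3, 5}-subgroups of Sym₇ are conjugate. -/
open MulAction Equiv Nat Pointwise

theorem Subgroup.le_stabilizer_orbit {G X : Type*} [Group G] [MulAction G X]
    (H : Subgroup G) (a : X) : H ≤ stabilizer G (orbit H a) := fun g hg => by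
  rw [mem_stabilizer_iff, ← Subgroup.coe_mk H g hg, ← Submonoid.smul_def (S := H.toSubmonoid)]
  exact smul_orbit (G := H) _ _

theorem MulAction.exists_map_conj_stabilizer_eq {G X : Type*} [Group G] [MulAction G X]
    [IsPretransitive G X] (a b : X) :
    ∃ g : G, (stabilizer G a).map (MulAut.conj g).toMonoidHom = stabilizer G b := by
  obtain ⟨g, rfl⟩ := exists_smul_eq G a b
  exact ⟨g, (stabilizer_smul_eq_stabilizer_map_conj g a).symm⟩

theorem IsHallSubgroup.card_eq {G : Type*} [Group G] {π : Set ℕ} {H : Subgroup G}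
    (hH : IsHallSubgroup π H) {a b : ℕ} (hab : Nat.card G = a * b)
    (ha : ∀ p : ℕ, p.Prime → p ∣ a → p ∈ π) (hb : ∀ p ∈ π, ¬ p ∣ b) :
    Nat.card H = a := by
  have hmul : Nat.card H * H.index = a * b := H.card_mul_index.trans hab
  have hHb : Nat.Coprime (Nat.card H) b :=
    Nat.coprime_of_dvd fun p hp hpH => hb p (hH.1 p hp hpH)
  have haH : Nat.Coprime a H.index :=
    Nat.coprime_of_dvd fun p hp hpa => hH.2 p (ha p hp hpa)
  exact Nat.dvd_antisymm (hHb.dvd_of_dvd_mul_right ⟨H.index, hmul.symm⟩)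
    (haH.dvd_of_dvd_mul_right ⟨b, hmul⟩)

namespace Equiv.Perm

variable {α : Type*} [Finite α]

theorem card_le_of_le_stabilizer_set {H : Subgroup (Perm α)} {s : Set α}
    (hH : H ≤ stabilizer (Perm α) s) : Nat.card H ≤ s.ncard ! * sᶜ.ncard ! := by
  have hs : ∀ g ∈ H, ∀ a, g a ∈ s ↔ a ∈ s := fun g hg => mem_stabilizer_set.1 (hH hg)
  have hsc : ∀ g ∈ H, ∀ a, g a ∈ sᶜ ↔ a ∈ sᶜ := fun g hg a => not_congr (hs g hg a)
  let restrict (g : H) : Perm s × Perm ↥sᶜ :=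
    (g.1.subtypePerm (hs g g.2), g.1.subtypePerm (hsc g g.2))
  have restrict_injective : Function.Injective restrict := by
    intro g h hgh
    ext a
    by_cases ha : a ∈ s
    · exact congrArg (fun p => (p.1 ⟨a, ha⟩ : α)) hgh
    · exact congrArg (fun p => (p.2 ⟨a, ha⟩ : α)) hgh
  calc Nat.card H ≤ Nat.card (Perm s × Perm ↥sᶜ) :=
        Nat.card_le_card_of_injective _ restrict_injective
    _ = s.ncard ! * sᶜ.ncard ! := by
      rw [Nat.card_prod, Nat.card_perm, Nat.card_perm, Nat.card_coe_set_eq, Nat.card_coe_set_eq]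

theorem card_stabilizer (a : α) :
    Nat.card (stabilizer (Perm α) a) = (Nat.card α - 1)! := by
  have : Nonempty α := ⟨a⟩
  have h := (stabilizer (Perm α) a).card_mul_index
  rw [index_stabilizer_of_transitive, Nat.card_perm, ← Nat.mul_factorial_pred Nat.card_pos.ne',
    mul_comm (Nat.card α)] at h
  exact Nat.eq_of_mul_eq_mul_right Nat.card_pos h

end Equiv.Perm

theorem ncard_orbit_eq_one_or_six {H : Subgroup (Perm (Fin 7))} (hH : Nat.card H = 720)
    (a : Fin 7) : (orbit H a).ncard = 1 ∨ (orbit H a).ncard = 6 := by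
  have hdvd : (orbit H a).ncard ∣ 720 :=
    hH ▸ index_stabilizer H a ▸ (stabilizer H a).index_dvd_card
  have hle : 720 ≤ (orbit H a).ncard ! * (7 - (orbit H a).ncard)! := by
    have h := Perm.card_le_of_le_stabilizer_set (H.le_stabilizer_orbit a)
    rwa [hH, Set.ncard_compl, Nat.card_fin] at h
  have hpos : 0 < (orbit H a).ncard := (Set.ncard_pos).2 ⟨a, mem_orbit_self a⟩
  have hle7 : (orbit H a).ncard ≤ 7 := by simpa using Set.ncard_le_card (orbit H a)
  generalize (orbit H a).ncard = k at *
  interval_cases k <;> simp_all [Nat.factorial]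

theorem exists_le_stabilizer_of_card_eq_720 {H : Subgroup (Perm (Fin 7))}
    (hH : Nat.card H = 720) : ∃ x : Fin 7, H ≤ stabilizer (Perm (Fin 7)) x := by
  set O := orbit H (0 : Fin 7)
  have hO : H ≤ stabilizer (Perm (Fin 7)) O := H.le_stabilizer_orbit 0
  obtain ⟨s, hs, hs1⟩ : ∃ s : Set (Fin 7), H ≤ stabilizer (Perm (Fin 7)) s ∧ s.ncard = 1 := by
    rcases ncard_orbit_eq_one_or_six hH 0 with h | h
    · exact ⟨O, hO, h⟩
    · exact ⟨Oᶜ, by rwa [stabilizer_compl], by rw [Set.ncard_compl, h, Nat.card_fin]⟩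
  obtain ⟨x, rfl⟩ := Set.ncard_eq_one.1 hs1
  exact ⟨x, stabilizer_singleton (G := Perm (Fin 7)) x ▸ hs⟩

theorem eq_stabilizer_of_card_eq_720 {H : Subgroup (Perm (Fin 7))} (hH : Nat.card H = 720) :
    ∃ x : Fin 7, H = stabilizer (Perm (Fin 7)) x := by
  obtain ⟨x, hx⟩ := exists_le_stabilizer_of_card_eq_720 hH
  refine ⟨x, Subgroup.eq_of_le_of_card_ge hx ?_⟩
  rw [Perm.card_stabilizer, hH, Nat.card_fin]
  rfl

theorem card_eq_720_of_isHallSubgroup {H : Subgroup (Perm (Fin 7))}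
    (hH : IsHallSubgroup {2, 3, 5} H) : Nat.card H = 720 := by
  refine hH.card_eq (b := 7) (by rw [Nat.card_perm, Nat.card_fin]; rfl) (fun p hp hdvd => ?_)
    (by rintro p (rfl | rfl | rfl) <;> norm_num)
  have : p ∈ Nat.primeFactors 720 := Nat.mem_primeFactors.2 ⟨hp, hdvd, by norm_num⟩
  simpa [Nat.primeFactors, Nat.primeFactorsList_ofNat] using this

theorem sym7_hall_235_is_stabilizer :
    (∀ H : Subgroup (Equiv.Perm (Fin 7)), Nat.card H = 720 →
      ∃ x : Fin 7, H = MulAction.stabilizer (Equiv.Perm (Fin 7)) x) ∧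
    (∀ H K : Subgroup (Equiv.Perm (Fin 7)),
      IsHallSubgroup {2, 3, 5} H → IsHallSubgroup {2, 3, 5} K →
      ∃ g : Equiv.Perm (Fin 7), H.map (MulAut.conj g).toMonoidHom = K) := by
  refine ⟨fun H hH => eq_stabilizer_of_card_eq_720 hH, fun H K hH hK => ?_⟩
  obtain ⟨a, rfl⟩ := eq_stabilizer_of_card_eq_720 (card_eq_720_of_isHallSubgroup hH)
  obtain ⟨b, rfl⟩ := eq_stabilizer_of_card_eq_720 (card_eq_720_of_isHallSubgroup hK)
  exact exists_map_conj_stabilizer_eq a b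
end
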